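/- arXiv:2212.03142 — 3 statements merged into one kernel-verified Lean document; each statement's English description precedes it below -/
import Mathlib

section
/- Let w be a complex number that is algebraic over ℚ. If the minimal polynomial of w over ℚ has a complex root β with |β| ≥ 2, then the set of irreducible λ-quiddities over ⟨w⟩ is exactly {(0,kw,0,−kw) : k ∈ ℤ} ∪ {(kw,0,−kw,0) : k ∈ ℤ}. -/
open Matrix Polynomial

noncomputable section

/-- The elementary matrix [[a, -1], [1, 0]]. -/
def matE (a : ℂ) : Matrix (Fin 2) (Fin 2) ℂ := !![a, -1; 1, 0]

/-- M_n(a_1, …, a_n) = matE a_n * matE a_{n-1} * ⋯ * matE a_1, for the list [a_1, …, a_n]. -/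
def Mlist (l : List ℂ) : Matrix (Fin 2) (Fin 2) ℂ := (l.reverse.map matE).prod

/-- A λ-quiddity over R : a nonempty tuple of elements of R with M_n(a_1,…,a_n) = ±Id. -/
def IsQuiddity (R : Set ℂ) (l : List ℂ) : Prop :=
  l ≠ [] ∧ (∀ x ∈ l, x ∈ R) ∧ (Mlist l = 1 ∨ Mlist l = -1)

/-- (a_1,…,a_n) ⊕ (b_1,…,b_m) := (a_1+b_m, a_2,…,a_{n-1}, a_n+b_1, b_2,…,b_{m-1}). -/
def oplus (a b : List ℂ) : List ℂ :=
  (a.headI + b.getLastD 0) ::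
    (a.tail.dropLast ++ (a.getLastD 0 + b.headI) :: b.tail.dropLast)

/-- b is obtained from a by a cyclic permutation of a or of the reversal of a. -/
def CyclicEquiv (a b : List ℂ) : Prop :=
  (∃ k, b = a.rotate k) ∨ (∃ k, b = a.reverse.rotate k)

/-- A λ-quiddity c over R is reducible if c ∼ (a_1,…,a_m) ⊕ (b_1,…,b_l) with
(a_1,…,a_m) a tuple of elements of R, (b_1,…,b_l) a λ-quiddity over R, m ≥ 3 and l ≥ 3. -/
def ReducibleQuiddity (R : Set ℂ) (c : List ℂ) : Prop :=
  ∃ a b : List ℂ, (∀ x ∈ a, x ∈ R) ∧ IsQuiddity R b ∧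
    3 ≤ a.length ∧ 3 ≤ b.length ∧ CyclicEquiv c (oplus a b)

/-- The irreducible λ-quiddities over R : the λ-quiddities of size ≥ 3 which are not
reducible (those of size < 3, i.e. (0,0), are by convention not irreducible). -/
def IrreducibleQuiddity (R : Set ℂ) (c : List ℂ) : Prop :=
  IsQuiddity R c ∧ 3 ≤ c.length ∧ ¬ ReducibleQuiddity R c

/-- The subgroup ⟨w⟩ = {kw : k ∈ ℤ} of (ℂ, +), as a set. -/
def subgroupGen (w : ℂ) : Set ℂ := {x | ∃ k : ℤ, x = (k : ℂ) * w}

end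

/-!
If all entries of a tuple have modulus at least 2, the first row of the partial products grows
(`‖M₀₀‖ ≥ ‖M₀₁‖ + 1 ≥ 2`), so the product is not `±Id`. The entries of `M_n(k₁w, …, k_nw)` are
polynomials in `w` with rational coefficients, so `M_n(k₁w, …, k_nw) = ±Id` also holds with `w`
replaced by its conjugate `β`; as `‖β‖ ≥ 2`, some `kᵢ` vanishes. Hence every λ-quiddity over `⟨w⟩`
has a zero entry. A zero entry with neighbours `y` and `z` splits `(-z, 0, z, 0)` off a quiddity of
size at least 5, no quiddity of size 3 has a zero entry, and a quiddity of size 4 with a zero entry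
is a rotation of `(0, x, 0, -x)`.
-/

lemma Mlist_cons (x : ℂ) (l : List ℂ) : Mlist (x :: l) = Mlist l * matE x := by
  simp [Mlist]

lemma Mlist_append (l l' : List ℂ) : Mlist (l ++ l') = Mlist l' * Mlist l := by
  simp [Mlist]

lemma mul_eq_one_or_neg_one_comm {R : Type*} [Ring R] [IsDedekindFiniteMonoid R] {A B : R}
    (h : A * B = 1 ∨ A * B = -1) : B * A = 1 ∨ B * A = -1 := by
  refine h.imp mul_eq_one_comm.1 fun h' => ?_
  rw [← neg_eq_iff_eq_neg, ← mul_neg]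
  exact mul_eq_one_comm.1 (by rw [neg_mul, h', neg_neg])

lemma Mlist_eq_one_or_neg_one_of_isRotated {l l' : List ℂ} (hr : l ~r l')
    (h : Mlist l = 1 ∨ Mlist l = -1) : Mlist l' = 1 ∨ Mlist l' = -1 := by
  obtain ⟨n, rfl⟩ := hr
  rw [← List.take_append_drop (n % l.length) l, Mlist_append] at h
  rw [List.rotate_eq_drop_append_take_mod, Mlist_append]
  exact mul_eq_one_or_neg_one_comm h

lemma List.exists_isRotated_cons_of_mem {α : Type*} {l : List α} {a : α} (h : a ∈ l) :
    ∃ t, l ~r a :: t := by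
  obtain ⟨s, t, rfl⟩ := List.append_of_mem h
  exact ⟨t ++ s, List.isRotated_append⟩

lemma norm_Mlist_apply_zero_bounds {l : List ℂ} (hl : l ≠ []) (h : ∀ x ∈ l, 2 ≤ ‖x‖) :
    1 ≤ ‖Mlist l 0 1‖ ∧ ‖Mlist l 0 1‖ + 1 ≤ ‖Mlist l 0 0‖ := by
  induction l with
  | nil => exact absurd rfl hl
  | cons x t ih =>
    have hx : 2 ≤ ‖x‖ := h x List.mem_cons_self
    rcases eq_or_ne t [] with rfl | ht
    · simp [Mlist, matE]
      linarith
    obtain ⟨h01, h00⟩ := ih ht fun y hy => h y (List.mem_cons_of_mem x hy)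
    have e00 : Mlist (x :: t) 0 0 = x * Mlist t 0 0 + Mlist t 0 1 := by
      simp [Mlist_cons, matE, Matrix.mul_apply, Fin.sum_univ_two]; ring
    have e01 : Mlist (x :: t) 0 1 = -Mlist t 0 0 := by
      simp [Mlist_cons, matE, Matrix.mul_apply, Fin.sum_univ_two]
    have hgrow : ‖x‖ * ‖Mlist t 0 0‖ - ‖Mlist t 0 1‖ ≤ ‖Mlist (x :: t) 0 0‖ := by
      simpa [e00] using norm_sub_norm_le (x * Mlist t 0 0) (-Mlist t 0 1)
    rw [e01, norm_neg]
    constructor <;> nlinarith [norm_nonneg (Mlist t 0 0)]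

lemma Mlist_ne_one_or_neg_one_of_two_le_norm {l : List ℂ} (hl : l ≠ []) (h : ∀ x ∈ l, 2 ≤ ‖x‖) :
    ¬(Mlist l = 1 ∨ Mlist l = -1) := by
  have h01 := (norm_Mlist_apply_zero_bounds hl h).1
  rintro (h1 | h1) <;> norm_num [h1] at h01

noncomputable def matEX (k : ℤ) : Matrix (Fin 2) (Fin 2) ℚ[X] := !![(k : ℚ[X]) * X, -1; 1, 0]

noncomputable def MlistX (ks : List ℤ) : Matrix (Fin 2) (Fin 2) ℚ[X] := (ks.reverse.map matEX).prod

lemma map_aeval_MlistX (ks : List ℤ) (x : ℂ) :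
    (MlistX ks).map (aeval x) = Mlist (ks.map fun k : ℤ => (k : ℂ) * x) := by
  have hE : (aeval x).toRingHom.mapMatrix ∘ matEX = matE ∘ fun k : ℤ => (k : ℂ) * x := by
    funext k
    ext i j
    fin_cases i <;> fin_cases j <;> simp [matEX, matE]
  change (aeval x).toRingHom.mapMatrix (MlistX ks) = _
  rw [MlistX, map_list_prod, List.map_map, hE, Mlist, ← List.map_reverse, List.map_map]

lemma map_aeval_eq_of_aeval_minpoly_eq_zero {K A : Type*} [Field K] [CommRing A] [Algebra K A]
    {m n : Type*} {w β : A} (hβ : aeval β (minpoly K w) = 0) {P : Matrix m n K[X]}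
    {N : Matrix m n K} (h : P.map (aeval w) = N.map (algebraMap K A)) :
    P.map (aeval β) = N.map (algebraMap K A) := by
  ext i j
  have hw : aeval w (P i j - C (N i j)) = 0 := by
    simpa [sub_eq_zero] using congr_fun₂ h i j
  simpa [sub_eq_zero] using aeval_eq_zero_of_dvd_aeval_eq_zero (minpoly.dvd K w hw) hβ

lemma Mlist_map_mul_eq_one_or_neg_one_of_minpoly {w β : ℂ} (hβ : aeval β (minpoly ℚ w) = 0)
    (ks : List ℤ) (h : Mlist (ks.map fun k : ℤ => (k : ℂ) * w) = 1 ∨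
      Mlist (ks.map fun k : ℤ => (k : ℂ) * w) = -1) :
    Mlist (ks.map fun k : ℤ => (k : ℂ) * β) = 1 ∨ Mlist (ks.map fun k : ℤ => (k : ℂ) * β) = -1 := by
  have hone : (1 : Matrix (Fin 2) (Fin 2) ℂ) = (1 : Matrix _ _ ℚ).map (algebraMap ℚ ℂ) :=
    (map_one (algebraMap ℚ ℂ).mapMatrix).symm
  have hneg : (-1 : Matrix (Fin 2) (Fin 2) ℂ) = (-1 : Matrix _ _ ℚ).map (algebraMap ℚ ℂ) := by
    rw [Matrix.map_neg _ (map_neg _), ← hone]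
  simp only [← map_aeval_MlistX] at h ⊢
  -- `hneg` first, since `hone` also rewrites the `1` inside `-1`
  rw [hneg, hone] at h ⊢
  exact h.imp (map_aeval_eq_of_aeval_minpoly_eq_zero hβ) (map_aeval_eq_of_aeval_minpoly_eq_zero hβ)

lemma subgroupGen_eq_zmultiples (w : ℂ) : subgroupGen w = AddSubgroup.zmultiples w := by
  ext x
  simp [subgroupGen, AddSubgroup.mem_zmultiples_iff, eq_comm]

lemma exists_eq_map_mul_of_forall_mem_subgroupGen {w : ℂ} {c : List ℂ}
    (hc : ∀ x ∈ c, x ∈ subgroupGen w) : ∃ ks : List ℤ, c = ks.map fun k : ℤ => (k : ℂ) * w := by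
  induction c with
  | nil => exact ⟨[], rfl⟩
  | cons x t ih =>
    obtain ⟨ks, rfl⟩ := ih fun y hy => hc y (List.mem_cons_of_mem x hy)
    obtain ⟨k, rfl⟩ := hc x List.mem_cons_self
    exact ⟨k :: ks, rfl⟩

lemma zero_mem_of_isQuiddity_subgroupGen {w β : ℂ} (hβroot : aeval β (minpoly ℚ w) = 0)
    (hβ : 2 ≤ ‖β‖) {c : List ℂ} (hc : IsQuiddity (subgroupGen w) c) : (0 : ℂ) ∈ c := by
  obtain ⟨hne, hR, hpm⟩ := hc
  obtain ⟨ks, rfl⟩ := exists_eq_map_mul_of_forall_mem_subgroupGen hR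
  by_contra h0
  refine Mlist_ne_one_or_neg_one_of_two_le_norm (by simpa using hne) ?_
    (Mlist_map_mul_eq_one_or_neg_one_of_minpoly hβroot ks hpm)
  simp only [List.mem_map]
  rintro _ ⟨k, hk, rfl⟩
  have hk0 : k ≠ 0 := by
    rintro rfl
    exact h0 (List.mem_map.2 ⟨0, hk, by simp⟩)
  have hk1 : 1 ≤ ‖(k : ℂ)‖ := by
    rw [Complex.norm_intCast]
    exact_mod_cast Int.one_le_abs hk0
  calc 2 ≤ ‖β‖ := hβ
    _ ≤ ‖(k : ℂ)‖ * ‖β‖ := le_mul_of_one_le_left (norm_nonneg β) hk1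
    _ = ‖(k : ℂ) * β‖ := (norm_mul _ _).symm

lemma not_Mlist_eq_one_or_neg_one_of_length_eq_three {l : List ℂ} (hl : l.length = 3)
    (h0 : (0 : ℂ) ∈ l) : ¬(Mlist l = 1 ∨ Mlist l = -1) := by
  intro h
  obtain ⟨t, ht⟩ := List.exists_isRotated_cons_of_mem h0
  obtain ⟨x, y, rfl⟩ := List.length_eq_two.1 (by simpa [hl] using ht.perm.length_eq.symm)
  have h10 : Mlist [0, x, y] 1 0 = -1 := by
    simp [Mlist, matE]
  rcases Mlist_eq_one_or_neg_one_of_isRotated ht h with h' | h' <;> simp [h'] at h10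

lemma eq_of_Mlist_zero_cons_eq_one_or_neg_one {x y z : ℂ}
    (h : Mlist [0, x, y, z] = 1 ∨ Mlist [0, x, y, z] = -1) : y = 0 ∧ z = -x := by
  have h10 : Mlist [0, x, y, z] 1 0 = -y := by
    simp [Mlist, matE]
  obtain rfl : y = 0 := by
    rcases h with h | h <;> simpa [h] using h10
  have h01 : Mlist [0, x, 0, z] 0 1 = z + x := by
    simp [Mlist, matE]
  refine ⟨rfl, ?_⟩
  rcases h with h | h <;> simp [h] at h01 <;> linear_combination -h01

lemma Mlist_zero_x_zero_neg (x : ℂ) : Mlist [0, x, 0, -x] = 1 := by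
  simp [Mlist, matE, Matrix.one_fin_two]

lemma Mlist_x_zero_neg_zero (x : ℂ) : Mlist [x, 0, -x, 0] = 1 := by
  simp [Mlist, matE, Matrix.one_fin_two]

lemma length_oplus {a b : List ℂ} (ha : 2 ≤ a.length) (hb : 2 ≤ b.length) :
    (oplus a b).length = a.length + b.length - 2 := by
  simp [oplus]
  omega

lemma oplus_append_singleton {s : List ℂ} (hs : s ≠ []) (y z : ℂ) :
    oplus (s ++ [y + z]) [-z, 0, z, 0] = s ++ [y, 0, z] := by
  obtain ⟨x, s, rfl⟩ := List.exists_cons_of_ne_nil hs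
  have hlast : (x :: (s ++ [y + z])).getLast? = some (y + z) := List.getLast?_concat (l := x :: s)
  simp [oplus, hlast]

lemma CyclicEquiv.length_eq {a b : List ℂ} (h : CyclicEquiv a b) : a.length = b.length := by
  rcases h with ⟨k, rfl⟩ | ⟨k, rfl⟩ <;> simp

lemma CyclicEquiv.of_isRotated {a b : List ℂ} (h : a ~r b) : CyclicEquiv a b :=
  Or.inl (h.imp fun _ hk => hk.symm)

section AddSubgroup

variable (G : AddSubgroup ℂ)

lemma isQuiddity_zero_x_zero_neg {x : ℂ} (hx : x ∈ G) : IsQuiddity G [0, x, 0, -x] :=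
  ⟨by simp, by simp [hx, G.zero_mem, G.neg_mem], Or.inl (Mlist_zero_x_zero_neg x)⟩

lemma isQuiddity_x_zero_neg_zero {x : ℂ} (hx : x ∈ G) : IsQuiddity G [x, 0, -x, 0] :=
  ⟨by simp, by simp [hx, G.zero_mem, G.neg_mem], Or.inl (Mlist_x_zero_neg_zero x)⟩

lemma reducibleQuiddity_of_zero_mem {c : List ℂ} (hc : ∀ x ∈ c, x ∈ G) (h0 : (0 : ℂ) ∈ c)
    (h5 : 5 ≤ c.length) : ReducibleQuiddity G c := by
  obtain ⟨t, ht⟩ := List.exists_isRotated_cons_of_mem h0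
  have hlen : c.length = t.length + 1 := by simpa using ht.perm.length_eq
  obtain ⟨z, r, rfl⟩ := List.exists_cons_of_ne_nil (List.ne_nil_of_length_pos (l := t) (by omega))
  obtain ⟨s, y, rfl⟩ := (List.eq_nil_or_concat' r).resolve_left <| by
    rintro rfl
    simp only [List.length_cons, List.length_nil] at hlen
    omega
  have hs : 2 ≤ s.length := by
    simp only [List.length_cons, List.length_append, List.length_nil] at hlen; omega
  have hrot : c ~r s ++ [y, 0, z] := ht.trans ⟨2, by simp⟩
  have hmem : ∀ x ∈ s ++ [y, 0, z], x ∈ G := fun x hx => hc x (hrot.mem_iff.2 hx)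
  simp only [List.mem_append, List.mem_cons, List.not_mem_nil, or_false] at hmem
  refine ⟨s ++ [y + z], [-z, 0, z, 0], ?_, ?_, by simp; omega, by simp, ?_⟩
  · simp only [List.mem_append, List.mem_singleton]
    rintro x (hx | rfl)
    · exact hmem x (.inl hx)
    · exact G.add_mem (hmem y (by simp)) (hmem z (by simp))
  · simpa using isQuiddity_x_zero_neg_zero G (G.neg_mem (hmem z (by simp)))
  · rw [oplus_append_singleton (List.ne_nil_of_length_pos (by omega))]
    exact .of_isRotated hrot

variable {G}

lemma not_reducibleQuiddity_of_length_eq_four (hG : ∀ b, IsQuiddity G b → (0 : ℂ) ∈ b)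
    {c : List ℂ} (hc : c.length = 4) : ¬ReducibleQuiddity G c := by
  rintro ⟨a, b, -, hb, ha, hb3, hcab⟩
  have hlen := hcab.length_eq
  rw [length_oplus (by omega) (by omega)] at hlen
  exact not_Mlist_eq_one_or_neg_one_of_length_eq_three (by omega) (hG b hb) hb.2.2

lemma exists_eq_of_isQuiddity_of_length_eq_four {c : List ℂ} (hq : IsQuiddity G c)
    (h0 : (0 : ℂ) ∈ c) (hc : c.length = 4) :
    ∃ x ∈ G, c = [0, x, 0, -x] ∨ c = [x, 0, -x, 0] := by
  obtain ⟨t, ht⟩ := List.exists_isRotated_cons_of_mem h0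
  obtain ⟨x, y, z, rfl⟩ := List.length_eq_three.1 (by simpa [hc] using ht.perm.length_eq.symm)
  obtain ⟨rfl, rfl⟩ :=
    eq_of_Mlist_zero_cons_eq_one_or_neg_one (Mlist_eq_one_or_neg_one_of_isRotated ht hq.2.2)
  have hx : x ∈ G := hq.2.1 x (ht.mem_iff.2 (by simp))
  have hperm : c ∈ [[0, x, 0, -x], [x, 0, -x, 0], [0, -x, 0, x], [-x, 0, x, 0]] := by
    simpa [List.cyclicPermutations_cons] using List.mem_cyclicPermutations_iff.2 ht
  simp only [List.mem_cons, List.not_mem_nil, or_false] at hperm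
  rcases hperm with rfl | rfl | rfl | rfl
  exacts [⟨x, hx, .inl rfl⟩, ⟨x, hx, .inr rfl⟩, ⟨-x, G.neg_mem hx, .inl (by rw [neg_neg])⟩,
    ⟨-x, G.neg_mem hx, .inr (by rw [neg_neg])⟩]

theorem irreducibleQuiddity_iff_of_forall_zero_mem (hG : ∀ c, IsQuiddity G c → (0 : ℂ) ∈ c)
    (c : List ℂ) : IrreducibleQuiddity G c ↔ ∃ x ∈ G, c = [0, x, 0, -x] ∨ c = [x, 0, -x, 0] := by
  constructor
  · rintro ⟨hq, h3, hirr⟩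
    have h0 := hG c hq
    have hne3 : c.length ≠ 3 := fun h => not_Mlist_eq_one_or_neg_one_of_length_eq_three h h0 hq.2.2
    have hlt5 : c.length < 5 := by
      by_contra! h5
      exact hirr (reducibleQuiddity_of_zero_mem G hq.2.1 h0 h5)
    exact exists_eq_of_isQuiddity_of_length_eq_four hq h0 (by omega)
  · rintro ⟨x, hx, rfl | rfl⟩
    · exact ⟨isQuiddity_zero_x_zero_neg G hx, by simp,
        not_reducibleQuiddity_of_length_eq_four hG rfl⟩
    · exact ⟨isQuiddity_x_zero_neg_zero G hx, by simp,
        not_reducibleQuiddity_of_length_eq_four hG rfl⟩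

end AddSubgroup

theorem stmt0_general (w : ℂ) (β : ℂ)
    (hβroot : Polynomial.aeval β (minpoly ℚ w) = 0)
    (hβ : 2 ≤ ‖β‖) :
    {c : List ℂ | IrreducibleQuiddity (subgroupGen w) c} =
      {c : List ℂ | ∃ k : ℤ, c = [0, (k : ℂ) * w, 0, -((k : ℂ) * w)]} ∪
      {c : List ℂ | ∃ k : ℤ, c = [(k : ℂ) * w, 0, -((k : ℂ) * w), 0]} := by
  have hG : ∀ c, IsQuiddity (AddSubgroup.zmultiples w) c → (0 : ℂ) ∈ c := by
    rw [← subgroupGen_eq_zmultiples]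
    exact fun c => zero_mem_of_isQuiddity_subgroupGen hβroot hβ
  ext c
  simp only [Set.mem_union, Set.mem_ofPred_eq, subgroupGen_eq_zmultiples,
    irreducibleQuiddity_iff_of_forall_zero_mem hG, AddSubgroup.mem_zmultiples_iff, zsmul_eq_mul,
    exists_exists_eq_and, exists_or]

theorem stmt0 (w : ℂ) (hw : IsAlgebraic ℚ w) (β : ℂ)
    (hβroot : Polynomial.aeval β (minpoly ℚ w) = 0)
    (hβ : 2 ≤ ‖β‖) :
    {c : List ℂ | IrreducibleQuiddity (subgroupGen w) c} =
      {c : List ℂ | ∃ k : ℤ, c = [0, (k : ℂ) * w, 0, -((k : ℂ) * w)]} ∪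
      {c : List ℂ | ∃ k : ℤ, c = [(k : ℂ) * w, 0, -((k : ℂ) * w), 0]} :=
  stmt0_general w β hβroot hβ
end

section
/- Let α be a complex number algebraic over ℚ and let β be a conjugate of α (a complex root of the minimal polynomial of α over ℚ). For k_1,…,k_n ∈ ℤ such that (k_1α,…,k_nα) is a λ-quiddity over ⟨α⟩, the λ-quiddity (k_1α,…,k_nα) is irreducible over ⟨α⟩ if and only if (k_1β,…,k_nβ) is an irreducible λ-quiddity over ⟨β⟩. -/
open Matrix Polynomial

/-!
The entries of `M_n(k_1 γ, …, k_n γ)` are polynomials in `γ` with rational coefficients, so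
`M_n = ±Id` at `α` is a system of polynomial identities satisfied by `α`, hence by every
conjugate `β`. Multiplication by `β / α` is additive, maps `⟨α⟩` onto `⟨β⟩` sending `k α` to
`k β`, and commutes with `⊕` and `∼`; by the first point it sends the λ-quiddity summand of a
decomposition over `⟨α⟩` to a λ-quiddity over `⟨β⟩`, so reducibility transfers as well. Being
conjugate (having the same minimal polynomial) is symmetric, which gives both directions.
-/

lemma List.headI_map_addMonoidHom (f : ℂ →+ ℂ) (l : List ℂ) :
    (l.map f).headI = f l.headI := by
  cases l with
  | nil => exact (map_zero f).symm
  | cons a t => rfl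

lemma List.getLastD_zero_map_addMonoidHom (f : ℂ →+ ℂ) (l : List ℂ) :
    (l.map f).getLastD 0 = f (l.getLastD 0) := by
  simp only [List.getLastD_eq_getLast?, List.getLast?_map]
  cases l.getLast? <;> simp

lemma map_oplus (f : ℂ →+ ℂ) (a b : List ℂ) :
    (oplus a b).map f = oplus (a.map f) (b.map f) := by
  simp only [oplus, List.map_cons, List.map_append, List.map_dropLast, List.map_tail,
    List.headI_map_addMonoidHom, List.getLastD_zero_map_addMonoidHom, map_add]

lemma CyclicEquiv.map (f : ℂ → ℂ) {a b : List ℂ} (h : CyclicEquiv a b) :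
    CyclicEquiv (a.map f) (b.map f) := by
  rcases h with ⟨k, rfl⟩ | ⟨k, rfl⟩
  · exact Or.inl ⟨k, List.map_rotate f a k⟩
  · exact Or.inr ⟨k, by rw [List.map_rotate, List.map_reverse]⟩

/-- Elaborating `ks.map fun k => (k : ℂ) * γ` first lifts `ks` to a `List ℂ` through the list
monad. -/
lemma map_intCast_mul_eq_map_int (γ : ℂ) (ks : List ℤ) :
    (ks.map fun k => (k : ℂ) * γ) = ks.map fun k : ℤ => (k : ℂ) * γ := by
  change List.map _ (ks.flatMap (pure ∘ Int.cast)) = _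
  rw [List.flatMap_pure_eq_map, List.map_map]
  rfl

lemma forall_mem_map_intCast_mul_subgroupGen (γ : ℂ) (ks : List ℤ) :
    ∀ x ∈ ks.map (fun k : ℤ => (k : ℂ) * γ), x ∈ subgroupGen γ := by
  simp only [List.mem_map]
  rintro _ ⟨k, -, rfl⟩
  exact ⟨k, rfl⟩

lemma exists_eq_map_intCast_mul {γ : ℂ} {l : List ℂ} (h : ∀ x ∈ l, x ∈ subgroupGen γ) :
    ∃ ks : List ℤ, l = ks.map fun k : ℤ => (k : ℂ) * γ := by
  induction l with
  | nil => exact ⟨[], rfl⟩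
  | cons x t ih =>
    obtain ⟨ks, rfl⟩ := ih fun y hy => h y (List.mem_cons_of_mem _ hy)
    obtain ⟨k, rfl⟩ := h x List.mem_cons_self
    exact ⟨k :: ks, rfl⟩

/-- Multiplication by `β / α`; when `α = 0` it is the zero map (as `β / 0 = 0`). -/
noncomputable def rescale (α β : ℂ) : ℂ →+ ℂ := AddMonoidHom.mulLeft (β / α)

lemma rescale_intCast_mul {α β : ℂ} (hβ : α = 0 → β = 0) (k : ℤ) :
    rescale α β ((k : ℂ) * α) = (k : ℂ) * β := by
  rcases eq_or_ne α 0 with rfl | hα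
  · simp [rescale, hβ rfl]
  · simp only [rescale, AddMonoidHom.coe_mulLeft]
    field_simp

lemma map_rescale_map_intCast_mul {α β : ℂ} (hβ : α = 0 → β = 0) (ks : List ℤ) :
    (ks.map fun k : ℤ => (k : ℂ) * α).map (rescale α β) =
      ks.map fun k : ℤ => (k : ℂ) * β := by
  simp only [List.map_map, Function.comp_def, rescale_intCast_mul hβ]

/-- `matE (k * γ)` as a polynomial in `γ`. -/
noncomputable def matEPoly (k : ℤ) : Matrix (Fin 2) (Fin 2) ℚ[X] :=
  !![(k : ℚ[X]) * X, -1; 1, 0]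

noncomputable def MlistPoly (ks : List ℤ) : Matrix (Fin 2) (Fin 2) ℚ[X] :=
  (ks.reverse.map matEPoly).prod

lemma Mlist_map_intCast_mul (γ : ℂ) (ks : List ℤ) :
    Mlist (ks.map fun k : ℤ => (k : ℂ) * γ) = (MlistPoly ks).map (aeval γ) := by
  have hE : ∀ k : ℤ, matE ((k : ℂ) * γ) = (matEPoly k).map (aeval γ) := fun k => by
    ext i j
    fin_cases i <;> fin_cases j <;> simp [matE, matEPoly]
  change _ = (aeval γ : ℚ[X] →ₐ[ℚ] ℂ).mapMatrix _
  rw [MlistPoly, map_list_prod, Mlist, ← List.map_reverse, List.map_map, List.map_map]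
  exact congrArg List.prod (List.map_congr_left fun k _ => hE k)

section Conjugates

variable {α β : ℂ}

lemma aeval_eq_algebraMap_of_minpoly_eq (hαβ : minpoly ℚ α = minpoly ℚ β) {p : ℚ[X]} {q : ℚ}
    (hp : aeval α p = algebraMap ℚ ℂ q) : aeval β p = algebraMap ℚ ℂ q := by
  have hroot : aeval α (p - C q) = 0 := by rw [map_sub, aeval_C, hp, sub_self]
  obtain ⟨r, hr⟩ := minpoly.dvd ℚ α hroot
  rw [hαβ] at hr
  have := congrArg (aeval β) hr
  rwa [map_mul, minpoly.aeval, zero_mul, map_sub, aeval_C, sub_eq_zero] at this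

lemma eq_zero_of_minpoly_eq (hαβ : minpoly ℚ α = minpoly ℚ β) (hα : α = 0) : β = 0 := by
  subst hα
  simpa using aeval_eq_algebraMap_of_minpoly_eq (p := X) (q := 0) hαβ (by simp)

lemma Matrix.map_aeval_eq_of_minpoly_eq {n : Type*} (hαβ : minpoly ℚ α = minpoly ℚ β)
    {M : Matrix n n ℚ[X]} {N : Matrix n n ℚ}
    (h : M.map (aeval α) = N.map (algebraMap ℚ ℂ)) :
    M.map (aeval β) = N.map (algebraMap ℚ ℂ) := by
  ext i j
  exact aeval_eq_algebraMap_of_minpoly_eq hαβ (congrFun (congrFun h i) j)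

lemma Mlist_map_intCast_mul_eq_of_minpoly_eq (hαβ : minpoly ℚ α = minpoly ℚ β) (ks : List ℤ)
    {s : Matrix (Fin 2) (Fin 2) ℚ}
    (h : Mlist (ks.map fun k : ℤ => (k : ℂ) * α) = s.map (algebraMap ℚ ℂ)) :
    Mlist (ks.map fun k : ℤ => (k : ℂ) * β) = s.map (algebraMap ℚ ℂ) := by
  rw [Mlist_map_intCast_mul] at h ⊢
  exact Matrix.map_aeval_eq_of_minpoly_eq hαβ h

lemma Mlist_eq_one_or_neg_one_of_minpoly_eq (hαβ : minpoly ℚ α = minpoly ℚ β) (ks : List ℤ)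
    (h : Mlist (ks.map fun k : ℤ => (k : ℂ) * α) = 1 ∨
      Mlist (ks.map fun k : ℤ => (k : ℂ) * α) = -1) :
    Mlist (ks.map fun k : ℤ => (k : ℂ) * β) = 1 ∨
      Mlist (ks.map fun k : ℤ => (k : ℂ) * β) = -1 := by
  have hone : (1 : Matrix (Fin 2) (Fin 2) ℚ).map (algebraMap ℚ ℂ) = 1 :=
    map_one (algebraMap ℚ ℂ).mapMatrix
  have hneg : (-1 : Matrix (Fin 2) (Fin 2) ℚ).map (algebraMap ℚ ℂ) = -1 := by
    change (algebraMap ℚ ℂ).mapMatrix (-1) = -1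
    rw [map_neg, map_one]
  rw [← hneg, ← hone] at h ⊢
  exact h.imp (Mlist_map_intCast_mul_eq_of_minpoly_eq hαβ ks)
    (Mlist_map_intCast_mul_eq_of_minpoly_eq hαβ ks)

lemma IsQuiddity.of_minpoly_eq (hαβ : minpoly ℚ α = minpoly ℚ β) {ks : List ℤ}
    (h : IsQuiddity (subgroupGen α) (ks.map fun k : ℤ => (k : ℂ) * α)) :
    IsQuiddity (subgroupGen β) (ks.map fun k : ℤ => (k : ℂ) * β) := by
  obtain ⟨hne, -, hM⟩ := h
  exact ⟨by simpa using hne, forall_mem_map_intCast_mul_subgroupGen β ks,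
    Mlist_eq_one_or_neg_one_of_minpoly_eq hαβ ks hM⟩

lemma ReducibleQuiddity.of_minpoly_eq (hαβ : minpoly ℚ α = minpoly ℚ β) {ks : List ℤ}
    (h : ReducibleQuiddity (subgroupGen α) (ks.map fun k : ℤ => (k : ℂ) * α)) :
    ReducibleQuiddity (subgroupGen β) (ks.map fun k : ℤ => (k : ℂ) * β) := by
  obtain ⟨a, b, ha, hb, ha3, hb3, hc⟩ := h
  have hzero := eq_zero_of_minpoly_eq hαβ
  obtain ⟨js, rfl⟩ := exists_eq_map_intCast_mul ha
  obtain ⟨ls, rfl⟩ := exists_eq_map_intCast_mul hb.2.1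
  refine ⟨js.map fun k : ℤ => (k : ℂ) * β, ls.map fun k : ℤ => (k : ℂ) * β,
    forall_mem_map_intCast_mul_subgroupGen β js, hb.of_minpoly_eq hαβ,
    by simpa using ha3, by simpa using hb3, ?_⟩
  simpa only [map_oplus, map_rescale_map_intCast_mul hzero] using hc.map (rescale α β)

lemma IrreducibleQuiddity.of_minpoly_eq (hαβ : minpoly ℚ α = minpoly ℚ β) {ks : List ℤ}
    (h : IrreducibleQuiddity (subgroupGen α) (ks.map fun k : ℤ => (k : ℂ) * α)) :
    IrreducibleQuiddity (subgroupGen β) (ks.map fun k : ℤ => (k : ℂ) * β) :=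
  ⟨h.1.of_minpoly_eq hαβ, by simpa using h.2.1,
    fun hr => h.2.2 (hr.of_minpoly_eq hαβ.symm)⟩

end Conjugates

theorem stmt7_general (α : ℂ) (hα : IsAlgebraic ℚ α) (β : ℂ)
    (hβ : Polynomial.aeval β (minpoly ℚ α) = 0)
    (ks : List ℤ) :
    IrreducibleQuiddity (subgroupGen α) (ks.map fun k => (k : ℂ) * α) ↔
      IrreducibleQuiddity (subgroupGen β) (ks.map fun k => (k : ℂ) * β) := by
  have hαβ : minpoly ℚ α = minpoly ℚ β :=
    minpoly.eq_of_irreducible_of_monic (minpoly.irreducible hα.isIntegral) hβ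
      (minpoly.monic hα.isIntegral)
  rw [map_intCast_mul_eq_map_int α, map_intCast_mul_eq_map_int β]
  exact ⟨IrreducibleQuiddity.of_minpoly_eq hαβ, IrreducibleQuiddity.of_minpoly_eq hαβ.symm⟩

theorem stmt7 (α : ℂ) (hα : IsAlgebraic ℚ α) (β : ℂ)
    (hβ : Polynomial.aeval β (minpoly ℚ α) = 0)
    (ks : List ℤ)
    (h : IsQuiddity (subgroupGen α) (ks.map fun k => (k : ℂ) * α)) :
    IrreducibleQuiddity (subgroupGen α) (ks.map fun k => (k : ℂ) * α) ↔
      IrreducibleQuiddity (subgroupGen β) (ks.map fun k => (k : ℂ) * β) :=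
  stmt7_general α hα β hβ ks
end

section
/- Let w be a nonzero complex number, n ≥ 1, k_1,…,k_{2n} ∈ ℂ, and ε ∈ {1, −1}. If M_{2n}(k_1 w, k_2 w, …, k_{2n−1} w, k_{2n} w) = ε·Id, then M_{2n}(k_1, k_2 w², k_3, k_4 w², …, k_{2n−1}, k_{2n} w²) = ε·Id. -/
open Matrix Polynomial

lemma Mlist_append_singleton (l : List ℂ) (x : ℂ) :
    Mlist (l ++ [x]) = matE x * Mlist l := by
  simp [Mlist]

lemma key_step (w a b : ℂ) (hw : w ≠ 0) :
    matE (b * w ^ 2) * matE a * !![(1:ℂ), 0; 0, w⁻¹] =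
      !![(1:ℂ), 0; 0, w⁻¹] * (matE (b * w) * matE (a * w)) := by
  have : w⁻¹ * w = 1 := inv_mul_cancel₀ hw
  ext i j
  fin_cases i <;> fin_cases j <;> simp [matE, Matrix.mul_fin_two] <;> first | (field_simp; try ring) | ring

lemma conj_eq (w : ℂ) (hw : w ≠ 0) (k : ℕ → ℂ) (n : ℕ) :
    Mlist ((List.range (2 * n)).map fun i => if i % 2 = 0 then k i else k i * w ^ 2) =
      !![(1:ℂ), 0; 0, w⁻¹] * Mlist ((List.range (2 * n)).map fun i => k i * w) *
        !![(1:ℂ), 0; 0, w] := by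
  induction n with
  | zero =>
      simp [Mlist, Matrix.mul_fin_two]
      ext i j; fin_cases i <;> fin_cases j <;>
        simp [Matrix.one_apply, inv_mul_cancel₀ hw]
  | succ m ih =>
      have hr : List.range (2 * (m + 1)) = List.range (2 * m) ++ [2 * m, 2 * m + 1] := by
        have h1 : 2 * (m + 1) = (2 * m + 1) + 1 := by ring
        rw [h1, List.range_succ, List.range_succ]
        simp
      have he : (2 * m) % 2 = 0 := by omega
      have ho : (2 * m + 1) % 2 ≠ 0 := by omega
      rw [hr]
      simp only [List.map_append, List.map_cons, List.map_nil, he, ho, if_pos, if_neg ho, if_false]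
      have h2 : ∀ (f : ℕ → ℂ) (l : List ℂ), Mlist (l ++ [f (2*m), f (2*m+1)]) =
          matE (f (2*m+1)) * (matE (f (2*m)) * Mlist l) := by
        intro f l
        have : l ++ [f (2*m), f (2*m+1)] = (l ++ [f (2*m)]) ++ [f (2*m+1)] := by simp
        rw [this, Mlist_append_singleton, Mlist_append_singleton]
      rw [show ((List.range (2*m)).map fun i => if i % 2 = 0 then k i else k i * w ^ 2)
            ++ [k (2*m), k (2*m+1) * w ^ 2]
          = (((List.range (2*m)).map fun i => if i % 2 = 0 then k i else k i * w ^ 2)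
            ++ [k (2*m)]) ++ [k (2*m+1) * w ^ 2] by simp,
        Mlist_append_singleton, Mlist_append_singleton,
        show ((List.range (2*m)).map fun i => k i * w) ++ [k (2*m) * w, k (2*m+1) * w]
          = (((List.range (2*m)).map fun i => k i * w) ++ [k (2*m) * w]) ++ [k (2*m+1) * w]
          by simp,
        Mlist_append_singleton, Mlist_append_singleton, ih]
      have := key_step w (k (2*m)) (k (2*m+1)) hw
      calc matE (k (2*m+1) * w ^ 2) * (matE (k (2*m)) *
            (!![(1:ℂ), 0; 0, w⁻¹] * Mlist ((List.range (2*m)).map fun i => k i * w) *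
              !![(1:ℂ), 0; 0, w]))
          = (matE (k (2*m+1) * w ^ 2) * matE (k (2*m)) * !![(1:ℂ), 0; 0, w⁻¹]) *
              Mlist ((List.range (2*m)).map fun i => k i * w) * !![(1:ℂ), 0; 0, w] := by
            noncomm_ring
        _ = (!![(1:ℂ), 0; 0, w⁻¹] * (matE (k (2*m+1) * w) * matE (k (2*m) * w))) *
              Mlist ((List.range (2*m)).map fun i => k i * w) * !![(1:ℂ), 0; 0, w] := by
            rw [this]
        _ = _ := by noncomm_ring

theorem stmt13 (w : ℂ) (hw : w ≠ 0) (n : ℕ) (hn : 1 ≤ n) (k : ℕ → ℂ)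
    (ε : ℂ) (hε : ε = 1 ∨ ε = -1)
    (h : Mlist ((List.range (2 * n)).map fun i => k i * w) =
      ε • (1 : Matrix (Fin 2) (Fin 2) ℂ)) :
    Mlist ((List.range (2 * n)).map fun i => if i % 2 = 0 then k i else k i * w ^ 2) =
      ε • (1 : Matrix (Fin 2) (Fin 2) ℂ) := by
  rw [conj_eq w hw k n, h]
  have hPQ : !![(1:ℂ), 0; 0, w⁻¹] * !![(1:ℂ), 0; 0, w] = 1 := by
    ext i j; fin_cases i <;> fin_cases j <;>
      simp [Matrix.mul_fin_two, Matrix.one_apply, inv_mul_cancel₀ hw]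
  rw [mul_smul_comm, smul_mul_assoc, mul_one, hPQ]
end
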